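/- Let 0 ≤ λ_i ≤ 1 with λ_1 + λ_2 < 1 and λ_2 + λ_3 < 1, and let the 3-queue path-graph system evolve under the non-MSM inner-queue policy π_IQ defined by: S(t) = (0,1,0) if Q_2(t) > 0, and S(t) = (1,0,1) otherwise. Then limsup_{T→∞} (1/T) ∑_{t=0}^{T−1} ∑_{i=1}^{3} E[Q_i(t)] < ∞; that is, π_IQ is throughput-optimal even though it does not always schedule the maximum possible number of nonempty non-interfering queues. -/

import Mathlib

/-!
Queue 2 (index `1`) is served whenever it is nonempty and receives at most one packet per slot,
so it never holds more than one packet and `Q₂(t + 1) = A₂(t)`. Hence each outer queue `k` is a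
single-server queue whose service indicator `1{Q₂(t) = 0} = 1 - A₂(t - 1)` has mean `1 - λ₂`;
both it and the arrival `A_k(t)` are independent of the backlog `Q_k(t)`, which is a function of
`A_k(s)`, `s < t`, and `A₂(s)`, `s < t - 1`. The quadratic Lyapunov function `Q_k²` therefore
drifts by at most `2 - 2 (1 - λ_k - λ₂) E Q_k(t)`, and telescoping bounds the time average of
`E Q_k` by `1 / (1 - λ_k - λ₂)`.
-/

open MeasureTheory ProbabilityTheory Filter
open scoped ENNReal

/-- The non-MSM inner-queue policy π_IQ for the 3-queue path graph:
serve queue 2 whenever it is nonempty, and serve queues 1 and 3 otherwise. -/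
def piIQ (q : Fin 3 → ℕ) : Fin 3 → ℕ :=
  if 0 < q 1 then ![0, 1, 0] else ![1, 0, 1]

theorem ProbabilityTheory.iIndepFun.indepFun_of_determined {Ω ι β γ δ : Type*} [MeasurableSpace Ω]
    {μ : Measure Ω} [MeasurableSpace β] [Countable β] [MeasurableSingletonClass β]
    [MeasurableSpace γ] [MeasurableSpace δ] {f : ι → Ω → β} (hf : iIndepFun f μ)
    (hfm : ∀ i, Measurable (f i)) {S T : Finset ι} (hST : Disjoint S T) {X : Ω → γ} {Y : Ω → δ}
    (hX : ∀ ω ω', (∀ i ∈ S, f i ω = f i ω') → X ω = X ω')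
    (hY : ∀ ω ω', (∀ i ∈ T, f i ω = f i ω') → Y ω = Y ω') :
    IndepFun X Y μ := by
  rcases isEmpty_or_nonempty Ω with hΩ | ⟨⟨ω₀⟩⟩
  · simp [IndepFun_iff, Set.eq_empty_of_isEmpty]
  let restrict (U : Finset ι) (ω : Ω) (i : U) : β := f i ω
  have hXr : X = Function.extend (restrict S) X (fun _ => X ω₀) ∘ restrict S :=
    funext fun ω => (Function.FactorsThrough.extend_apply
      (fun ω ω' h => hX ω ω' fun i hi => congrFun h ⟨i, hi⟩) _ ω).symm
  have hYr : Y = Function.extend (restrict T) Y (fun _ => Y ω₀) ∘ restrict T :=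
    funext fun ω => (Function.FactorsThrough.extend_apply
      (fun ω ω' h => hY ω ω' fun i hi => congrFun h ⟨i, hi⟩) _ ω).symm
  rw [hXr, hYr]
  exact (hf.indepFun_finset S T hST hfm).comp (measurable_of_countable _)
    (measurable_of_countable _)

theorem sq_tsub_add_add_le {x s a : ℕ} (hs : s ≤ 1) (ha : a ≤ 1) :
    (x - s + a) ^ 2 + 2 * (x * s) ≤ x ^ 2 + 2 * (x * a) + 2 := by
  interval_cases s <;> interval_cases a <;> rcases x with _ | x <;> simp <;> nlinarith

theorem ENNReal.mul_sum_range_le_of_add_le {F E : ℕ → ℝ≥0∞} {c d : ℝ≥0∞} (hF0 : F 0 = 0)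
    (hF : ∀ t, F (t + 1) + c * E t ≤ F t + d) (T : ℕ) :
    c * ∑ t ∈ Finset.range T, E t ≤ d * T := by
  have key : ∀ T : ℕ, F T + c * ∑ t ∈ Finset.range T, E t ≤ d * T := by
    intro T
    induction T with
    | zero => simp [hF0]
    | succ T ih =>
      calc F (T + 1) + c * ∑ t ∈ Finset.range (T + 1), E t
          = (F (T + 1) + c * E T) + c * ∑ t ∈ Finset.range T, E t := by
            rw [Finset.sum_range_succ]; ring
        _ ≤ (F T + d) + c * ∑ t ∈ Finset.range T, E t := add_le_add (hF T) le_rfl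
        _ ≤ d * T + d := by rw [add_right_comm]; gcongr
        _ = d * (T + 1 : ℕ) := by push_cast; ring
  exact le_trans le_add_self (key T)

theorem lintegral_natCast_eq_measure_eq_one {Ω : Type*} [MeasurableSpace Ω] {μ : Measure Ω}
    {f : Ω → ℕ} (hf : Measurable f)
    (h1 : ∀ ω, f ω ≤ 1) : ∫⁻ ω, (f ω : ℝ≥0∞) ∂μ = μ {ω | f ω = 1} := by
  rw [show {ω | f ω = 1} = f ⁻¹' {1} from rfl,
    ← lintegral_indicator_one (hf (measurableSet_singleton 1))]
  congr 1
  funext ω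
  rcases Nat.le_one_iff_eq_zero_or_eq_one.mp (h1 ω) with h | h <;> simp [h]

section Drift

variable {Ω : Type*} [MeasurableSpace Ω] {μ : Measure Ω} [IsProbabilityMeasure μ]

theorem lintegral_sq_tsub_add_add_le {x arr srv : Ω → ℕ} (harr : ∀ ω, arr ω ≤ 1)
    (hsrv : ∀ ω, srv ω ≤ 1) (hxm : Measurable x) (harrm : Measurable arr)
    (hsrvm : Measurable srv) (harrInd : IndepFun x arr μ) (hsrvInd : IndepFun x srv μ)
    (hx : ∫⁻ ω, (x ω : ℝ≥0∞) ∂μ ≠ ⊤) {a ε : ℝ≥0∞} (ha : a ≠ ⊤)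
    (harrMean : ∫⁻ ω, (arr ω : ℝ≥0∞) ∂μ ≤ a) (hsrvMean : a + ε ≤ ∫⁻ ω, (srv ω : ℝ≥0∞) ∂μ) :
    ∫⁻ ω, ((x ω - srv ω + arr ω : ℕ) : ℝ≥0∞) ^ 2 ∂μ + 2 * ε * ∫⁻ ω, (x ω : ℝ≥0∞) ∂μ
      ≤ ∫⁻ ω, (x ω : ℝ≥0∞) ^ 2 ∂μ + 2 := by
  set E := ∫⁻ ω, (x ω : ℝ≥0∞) ∂μ
  have hmul : ∀ {f : Ω → ℕ}, Measurable f → IndepFun x f μ →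
      ∫⁻ ω, (x ω : ℝ≥0∞) * f ω ∂μ = E * ∫⁻ ω, (f ω : ℝ≥0∞) ∂μ := fun hf hind =>
    lintegral_mul_eq_lintegral_mul_lintegral_of_indepFun (by fun_prop) (by fun_prop)
      (hind.comp (measurable_of_countable _) (measurable_of_countable _))
  have pointwise : ∀ ω, ((x ω - srv ω + arr ω : ℕ) : ℝ≥0∞) ^ 2 + 2 * ((x ω : ℝ≥0∞) * srv ω)
      ≤ (x ω : ℝ≥0∞) ^ 2 + 2 * ((x ω : ℝ≥0∞) * arr ω) + 2 := by
    intro ω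
    exact_mod_cast sq_tsub_add_add_le (hsrv ω) (harr ω)
  have integrated : ∫⁻ ω, ((x ω - srv ω + arr ω : ℕ) : ℝ≥0∞) ^ 2 ∂μ + 2 * (E * (a + ε))
      ≤ ∫⁻ ω, (x ω : ℝ≥0∞) ^ 2 ∂μ + 2 * (E * a) + 2 := by
    calc _ ≤ ∫⁻ ω, ((x ω - srv ω + arr ω : ℕ) : ℝ≥0∞) ^ 2 ∂μ
            + 2 * ∫⁻ ω, (x ω : ℝ≥0∞) * srv ω ∂μ := by
          rw [hmul hsrvm hsrvInd]; gcongr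
      _ = ∫⁻ ω, (((x ω - srv ω + arr ω : ℕ) : ℝ≥0∞) ^ 2 + 2 * ((x ω : ℝ≥0∞) * srv ω)) ∂μ := by
          rw [lintegral_add_right _ (by fun_prop), lintegral_const_mul _ (by fun_prop)]
      _ ≤ ∫⁻ ω, ((x ω : ℝ≥0∞) ^ 2 + 2 * ((x ω : ℝ≥0∞) * arr ω) + 2) ∂μ := lintegral_mono pointwise
      _ = ∫⁻ ω, (x ω : ℝ≥0∞) ^ 2 ∂μ + 2 * ∫⁻ ω, (x ω : ℝ≥0∞) * arr ω ∂μ + 2 := by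
          rw [lintegral_add_right _ measurable_const, lintegral_add_right _ (by fun_prop),
            lintegral_const_mul _ (by fun_prop), lintegral_const, measure_univ, mul_one]
      _ ≤ _ := by rw [hmul harrm harrInd]; gcongr
  refine ENNReal.le_of_add_le_add_right (a := 2 * (E * a)) (by finiteness) ?_
  calc _ = ∫⁻ ω, ((x ω - srv ω + arr ω : ℕ) : ℝ≥0∞) ^ 2 ∂μ + 2 * (E * (a + ε)) := by ring
    _ ≤ _ := integrated
    _ = _ := by ring

theorem mul_sum_lintegral_queue_le {X arr srv : ℕ → Ω → ℕ} (hX0 : ∀ ω, X 0 ω = 0)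
    (hX : ∀ t ω, X (t + 1) ω = X t ω - srv t ω + arr t ω) (harr : ∀ t ω, arr t ω ≤ 1)
    (hsrv : ∀ t ω, srv t ω ≤ 1) (harrm : ∀ t, Measurable (arr t))
    (hsrvm : ∀ t, Measurable (srv t)) (harrInd : ∀ t, IndepFun (X t) (arr t) μ)
    (hsrvInd : ∀ t, IndepFun (X t) (srv t) μ) {a ε : ℝ≥0∞} (ha : a ≠ ⊤)
    (harrMean : ∀ t, ∫⁻ ω, (arr t ω : ℝ≥0∞) ∂μ ≤ a)
    (hsrvMean : ∀ t, a + ε ≤ ∫⁻ ω, (srv t ω : ℝ≥0∞) ∂μ) (T : ℕ) :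
    ε * ∑ t ∈ Finset.range T, ∫⁻ ω, (X t ω : ℝ≥0∞) ∂μ ≤ T := by
  have hXm : ∀ t, Measurable (X t) := by
    intro t
    induction t with
    | zero => simp only [funext hX0, measurable_const]
    | succ t ih =>
      rw [show X (t + 1) = fun ω => X t ω - srv t ω + arr t ω from funext (hX t)]
      exact (measurable_of_countable fun p : ℕ × ℕ × ℕ => p.1 - p.2.1 + p.2.2).comp
        (ih.prodMk ((hsrvm t).prodMk (harrm t)))
  have hX_le : ∀ t ω, X t ω ≤ t := by
    intro t
    induction t with
    | zero => simp [hX0]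
    | succ t ih => intro ω; rw [hX]; have := ih ω; have := harr t ω; omega
  have hXfin : ∀ t, ∫⁻ ω, (X t ω : ℝ≥0∞) ∂μ ≠ ⊤ := fun t =>
    ne_top_of_le_ne_top (by simp : ∫⁻ _, (t : ℝ≥0∞) ∂μ ≠ ⊤)
      (lintegral_mono fun ω => Nat.cast_le.mpr (hX_le t ω))
  have drift := ENNReal.mul_sum_range_le_of_add_le (F := fun t => ∫⁻ ω, (X t ω : ℝ≥0∞) ^ 2 ∂μ)
    (E := fun t => ∫⁻ ω, (X t ω : ℝ≥0∞) ∂μ) (c := 2 * ε) (d := 2) (by simp [hX0])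
    (fun t => by
      simpa only [hX] using lintegral_sq_tsub_add_add_le (harr t) (hsrv t) (hXm t) (harrm t)
        (hsrvm t) (harrInd t) (hsrvInd t) (hXfin t) ha (harrMean t) (hsrvMean t)) T
  rw [mul_assoc] at drift
  exact (ENNReal.mul_le_mul_iff_right (by norm_num) (by norm_num)).mp drift

end Drift

theorem piIQ_one (q : Fin 3 → ℕ) : piIQ q 1 = if 0 < q 1 then 1 else 0 := by
  unfold piIQ; split_ifs <;> rfl

theorem piIQ_of_ne_one {k : Fin 3} (hk : k ≠ 1) (q : Fin 3 → ℕ) :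
    piIQ q k = if 0 < q 1 then 0 else 1 := by
  fin_cases k <;> first | exact absurd rfl hk | (unfold piIQ; split_ifs <;> rfl)

structure IsPiIQPath (a : Fin 3 → ℕ → ℕ) (q : ℕ → Fin 3 → ℕ) : Prop where
  zero : ∀ i, q 0 i = 0
  succ : ∀ t i, q (t + 1) i = q t i - piIQ (q t) i + a i t

namespace IsPiIQPath

variable {a a' : Fin 3 → ℕ → ℕ} {q q' : ℕ → Fin 3 → ℕ}

theorem middle_le_one (h : IsPiIQPath a q) (ha : ∀ t, a 1 t ≤ 1) (t : ℕ) : q t 1 ≤ 1 := by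
  induction t with
  | zero => simp [h.zero]
  | succ t ih => rw [h.succ, piIQ_one]; have := ha t; split_ifs <;> omega

theorem middle_succ (h : IsPiIQPath a q) (ha : ∀ t, a 1 t ≤ 1) (t : ℕ) : q (t + 1) 1 = a 1 t := by
  rw [h.succ, piIQ_one]; have := h.middle_le_one ha t; split_ifs <;> omega

theorem middle_congr (h : IsPiIQPath a q) (h' : IsPiIQPath a' q') (ha : ∀ t, a 1 t ≤ 1)
    (ha' : ∀ t, a' 1 t ≤ 1) {t : ℕ} (heq : a 1 (t - 1) = a' 1 (t - 1)) : q t 1 = q' t 1 := by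
  cases t with
  | zero => rw [h.zero, h'.zero]
  | succ t => rw [h.middle_succ ha, h'.middle_succ ha']; exact heq

theorem side_succ (h : IsPiIQPath a q) {k : Fin 3} (hk : k ≠ 1) (t : ℕ) :
    q (t + 1) k = q t k - (if 0 < q t 1 then 0 else 1) + a k t := by
  rw [h.succ, piIQ_of_ne_one hk]

theorem side_congr (h : IsPiIQPath a q) (h' : IsPiIQPath a' q') (ha : ∀ t, a 1 t ≤ 1)
    (ha' : ∀ t, a' 1 t ≤ 1) {k : Fin 3} (hk : k ≠ 1) {t : ℕ} (hk_eq : ∀ s < t, a k s = a' k s)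
    (h1_eq : ∀ s, s + 1 < t → a 1 s = a' 1 s) : q t k = q' t k := by
  induction t with
  | zero => rw [h.zero, h'.zero]
  | succ t ih =>
    have hmid : q t 1 = q' t 1 := by
      cases t with
      | zero => rw [h.zero, h'.zero]
      | succ t => rw [h.middle_succ ha, h'.middle_succ ha', h1_eq t (by omega)]
    rw [h.side_succ hk, h'.side_succ hk, hmid, hk_eq t (by omega),
      ih (fun s hs => hk_eq s (by omega)) (fun s hs => h1_eq s (by omega))]

end IsPiIQPath

section PiIQ

variable {Ω : Type*} [MeasurableSpace Ω] {μ : Measure Ω} {A : Fin 3 → ℕ → Ω → ℕ}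
  {Q : ℕ → Fin 3 → Ω → ℕ}

theorem measurable_of_isPiIQPath (hQ : ∀ ω, IsPiIQPath (fun i t => A i t ω) (fun t i => Q t i ω))
    (hAm : ∀ i t, Measurable (A i t)) (t : ℕ) (i : Fin 3) : Measurable (Q t i) := by
  suffices h : Measurable fun ω i => Q t i ω from (measurable_pi_apply i).comp h
  induction t with
  | zero => simp only [(hQ _).zero, measurable_const]
  | succ t ih =>
    simp only [(hQ _).succ]
    exact (measurable_of_countable fun p : (Fin 3 → ℕ) × (Fin 3 → ℕ) =>
      fun i => p.1 i - piIQ p.1 i + p.2 i).comp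
        (ih.prodMk (measurable_pi_lambda _ fun i => hAm i t))

theorem lintegral_middle_le (hQ : ∀ ω, IsPiIQPath (fun i t => A i t ω) (fun t i => Q t i ω))
    (hA1 : ∀ t ω, A 1 t ω ≤ 1) {p : ℝ≥0∞} (hAmean : ∀ t, ∫⁻ ω, (A 1 t ω : ℝ≥0∞) ∂μ = p)
    (t : ℕ) : ∫⁻ ω, (Q t 1 ω : ℝ≥0∞) ∂μ ≤ p := by
  cases t with
  | zero => simp [(hQ _).zero]
  | succ t => simp only [(hQ _).middle_succ (hA1 · _), hAmean, le_refl]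

theorem mul_sum_lintegral_side_le [IsProbabilityMeasure μ]
    (hQ : ∀ ω, IsPiIQPath (fun i t => A i t ω) (fun t i => Q t i ω))
    (hAm : ∀ i t, Measurable (A i t)) (hA1 : ∀ i t ω, A i t ω ≤ 1)
    (hAindep : iIndepFun (fun p : Fin 3 × ℕ => A p.1 p.2) μ) {p : Fin 3 → ℝ≥0∞}
    (hAmean : ∀ i t, ∫⁻ ω, (A i t ω : ℝ≥0∞) ∂μ = p i) {k : Fin 3} (hk : k ≠ 1) {ε : ℝ≥0∞}
    (hε : p k + ε + p 1 ≤ 1) (T : ℕ) :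
    ε * ∑ t ∈ Finset.range T, ∫⁻ ω, (Q t k ω : ℝ≥0∞) ∂μ ≤ T := by
  have hQm := measurable_of_isPiIQPath hQ hAm
  set srv : ℕ → Ω → ℕ := fun t ω => if 0 < Q t 1 ω then 0 else 1
  have hsrvm : ∀ t, Measurable (srv t) := fun t =>
    (measurable_of_countable fun n : ℕ => if 0 < n then 0 else 1).comp (hQm t 1)
  have hsrv_le : ∀ t ω, srv t ω ≤ 1 := fun t ω => by dsimp only [srv]; split_ifs <;> omega
  have hpast : ∀ t ω ω', (∀ x ∈ {k} ×ˢ Finset.range t ∪ {1} ×ˢ Finset.range (t - 1),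
      A x.1 x.2 ω = A x.1 x.2 ω') → Q t k ω = Q t k ω' := fun t ω ω' h =>
    (hQ ω).side_congr (hQ ω') (hA1 1 · ω) (hA1 1 · ω') hk
      (fun s hs => h (k, s) (by simp [hs])) (fun s hs => h (1, s) (by simp; omega))
  have indep_of_notMem : ∀ t x, x ∉ {k} ×ˢ Finset.range t ∪ {1} ×ˢ Finset.range (t - 1) →
      ∀ {Y : Ω → ℕ}, (∀ ω ω', A x.1 x.2 ω = A x.1 x.2 ω' → Y ω = Y ω') →
      IndepFun (Q t k) Y μ := fun t x hx Y hY =>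
    hAindep.indepFun_of_determined (fun x => hAm x.1 x.2) (Finset.disjoint_singleton_right.mpr hx)
      (hpast t) (fun ω ω' h => hY ω ω' (h x (Finset.mem_singleton_self x)))
  have hsrvMean : ∀ t, p k + ε ≤ ∫⁻ ω, (srv t ω : ℝ≥0∞) ∂μ := by
    intro t
    have hsum : ∫⁻ ω, (srv t ω : ℝ≥0∞) ∂μ + ∫⁻ ω, (Q t 1 ω : ℝ≥0∞) ∂μ = 1 := by
      have hpt : ∀ ω, (srv t ω : ℝ≥0∞) + Q t 1 ω = 1 := fun ω => by
        have := (hQ ω).middle_le_one (hA1 1 · ω) t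
        dsimp only [srv]
        split_ifs <;> norm_cast <;> omega
      rw [← lintegral_add_left (by fun_prop), lintegral_congr hpt, lintegral_one, measure_univ]
    have hp1 : p 1 ≠ ⊤ := ne_top_of_le_ne_top ENNReal.one_ne_top (le_trans le_add_self hε)
    refine ENNReal.le_of_add_le_add_right hp1 (hε.trans (hsum.symm.le.trans ?_))
    gcongr
    exact lintegral_middle_le hQ (hA1 1) (hAmean 1) t
  exact mul_sum_lintegral_queue_le (X := fun t ω => Q t k ω) (fun ω => (hQ ω).zero k)
    (fun t ω => (hQ ω).side_succ hk t) (hA1 k) hsrv_le (hAm k) hsrvm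
    (fun t => indep_of_notMem t (k, t) (by simp) fun ω ω' h => h)
    (fun t => indep_of_notMem t (1, t - 1) (by simp [hk]) fun ω ω' h => by
      simp only [(hQ ω).middle_congr (hQ ω') (hA1 1 · ω) (hA1 1 · ω') h])
    (ne_top_of_le_ne_top ENNReal.one_ne_top ((le_self_add.trans le_self_add).trans hε))
    (fun t => (hAmean k t).le) hsrvMean T

end PiIQ

theorem limsup_sum_div_lt_top {ι : Type*} [Fintype ι] {f : ℕ → ι → ℝ≥0∞}
    (h : ∀ i, ∃ C ≠ ⊤, ∀ T : ℕ, ∑ t ∈ Finset.range T, f t i ≤ C * T) :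
    limsup (fun T : ℕ => (∑ t ∈ Finset.range T, ∑ i, f t i) / (T : ℝ≥0∞)) atTop < ⊤ := by
  choose C hC hbound using h
  have hle : ∀ T : ℕ, (∑ t ∈ Finset.range T, ∑ i, f t i) / (T : ℝ≥0∞) ≤ ∑ i, C i := fun T =>
    ENNReal.div_le_of_le_mul <| by
      rw [Finset.sum_comm, Finset.sum_mul]
      exact Finset.sum_le_sum fun i _ => hbound i T
  calc _ ≤ ∑ i, C i := (limsup_le_limsup (Eventually.of_forall hle)).trans_eq (limsup_const _)
    _ < ⊤ := ENNReal.sum_lt_top.mpr fun i _ => (hC i).lt_top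

theorem piIQ_throughput_optimal
    {Ω : Type*} [MeasurableSpace Ω] (μ : Measure Ω) [IsProbabilityMeasure μ]
    (lam : Fin 3 → ℝ) (hlam : ∀ i, 0 ≤ lam i ∧ lam i ≤ 1)
    (hcap1 : lam 0 + lam 1 < 1) (hcap2 : lam 1 + lam 2 < 1)
    (A : Fin 3 → ℕ → Ω → ℕ)
    (hAmeas : ∀ i t, Measurable (A i t))
    (hA01 : ∀ i t ω, A i t ω ≤ 1)
    (hArate : ∀ i t, μ {ω | A i t ω = 1} = ENNReal.ofReal (lam i))
    (hAindep : iIndepFun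
      (fun p : Fin 3 × ℕ => fun ω => A p.1 p.2 ω) μ)
    (Q : ℕ → Fin 3 → Ω → ℕ)
    (hQ0 : ∀ i ω, Q 0 i ω = 0)
    (hQevol : ∀ t i ω,
      Q (t + 1) i ω = Q t i ω - piIQ (fun j => Q t j ω) i + A i t ω) :
    limsup (fun T : ℕ =>
        (∑ t ∈ Finset.range T, ∑ i, ∫⁻ ω, (Q t i ω : ℝ≥0∞) ∂μ) / (T : ℝ≥0∞))
      atTop < ⊤ := by
  have hpath : ∀ ω, IsPiIQPath (fun i t => A i t ω) (fun t i => Q t i ω) :=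
    fun ω => ⟨fun i => hQ0 i ω, fun t i => hQevol t i ω⟩
  have hmean : ∀ i t, ∫⁻ ω, (A i t ω : ℝ≥0∞) ∂μ = ENNReal.ofReal (lam i) := fun i t =>
    (lintegral_natCast_eq_measure_eq_one (hAmeas i t) (hA01 i t)).trans (hArate i t)
  have side : ∀ k, k ≠ 1 → lam k + lam 1 < 1 → ∃ C ≠ ⊤, ∀ T : ℕ,
      ∑ t ∈ Finset.range T, ∫⁻ ω, (Q t k ω : ℝ≥0∞) ∂μ ≤ C * T := by
    intro k hk hcap
    have hk0 := (hlam k).1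
    have hε : ENNReal.ofReal (1 - lam k - lam 1) ≠ 0 := (ENNReal.ofReal_pos.mpr (by linarith)).ne'
    have hgap : ENNReal.ofReal (lam k) + ENNReal.ofReal (1 - lam k - lam 1)
        + ENNReal.ofReal (lam 1) ≤ 1 := by
      rw [← ENNReal.ofReal_add hk0 (by linarith), ← ENNReal.ofReal_add (by linarith) (hlam 1).1,
        show lam k + (1 - lam k - lam 1) + lam 1 = 1 by ring, ENNReal.ofReal_one]
    exact ⟨_, ENNReal.inv_ne_top.mpr hε, fun T =>
      (ENNReal.mul_le_iff_le_inv hε ENNReal.ofReal_ne_top).mp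
        (mul_sum_lintegral_side_le hpath hAmeas hA01 hAindep hmean hk hgap T)⟩
  refine limsup_sum_div_lt_top fun i => ?_
  fin_cases i
  · exact side 0 (by decide) hcap1
  · refine ⟨ENNReal.ofReal (lam 1), ENNReal.ofReal_ne_top, fun T => ?_⟩
    calc _ ≤ ∑ _t ∈ Finset.range T, ENNReal.ofReal (lam 1) :=
          Finset.sum_le_sum fun t _ => lintegral_middle_le hpath (hA01 1) (hmean 1) t
      _ = _ := by rw [Finset.sum_const, Finset.card_range, nsmul_eq_mul, mul_comm]
  · exact side 2 (by decide) (by linarith)
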